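/- Let f : {−1,1}^n → {−1,1}, let δ ∈ (0,1], let π be a restriction fixing |π| ≤ d coordinates, and let τ > 2δd. Then the number of indices i ∈ {1,…,n} (not fixed by π) with Inf_i((f_δ)_π) ≥ τ is at most 1/(e·δ·(τ − 2δd)²), where (f_δ)_π is the restriction by π of the δ-smoothed version of f, and influence of a real-valued function is taken with respect to the absolute-value metric. -/

import Mathlib

/-!
Noise smoothing and restrictions of boolean functions on {-1,1}^n; a point of the cube is
encoded as `x : Fin n → Bool` (`true` encodes 1, `false` encodes -1). A restriction is
encoded as `π : Fin n → Option Bool`, where `π j = some b` fixes coordinate `j` to `b`.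
-/

/-- The ±1 real value encoded by a boolean: `true ↦ 1`, `false ↦ -1`. -/
noncomputable def bval (b : Bool) : ℝ := if b then 1 else -1

/-- The `δ`-smoothed version of `g`: `g_δ(x) = E[g(x̃)]`, where `x̃` is obtained from `x`
by flipping each coordinate independently with probability `δ/2` (equivalently,
rerandomizing each coordinate independently with probability `δ`). -/
noncomputable def smooth {n : ℕ} (δ : ℝ) (g : (Fin n → Bool) → ℝ) (x : Fin n → Bool) : ℝ :=
  ∑ y : Fin n → Bool, (∏ i : Fin n, if y i = x i then 1 - δ / 2 else δ / 2) * g y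

/-- Apply a restriction: coordinates fixed by `π` are overridden, the rest are read from `x`.
Thus `g ∘ applyR π` is the restricted function `g_π`, viewed as a function of all `n`
variables that ignores the fixed coordinates. -/
def applyR {n : ℕ} (π : Fin n → Option Bool) (x : Fin n → Bool) : Fin n → Bool :=
  fun j => (π j).getD (x j)

/-- `|π|`: the number of coordinates fixed by the restriction `π`. -/
def rsize {n : ℕ} (π : Fin n → Option Bool) : ℕ :=
  (Finset.univ.filter fun j => (π j).isSome).card

/-- The influence of variable `i` on a real-valued `u`, with respect to the absolute-value
metric: `Inf_i(u) = E_x[|u(x) − u(x^{~i})|]`, where `x` is uniform and `x^{~i}` is `x` with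
its `i`-th coordinate rerandomized. -/
noncomputable def inflR {n : ℕ} (u : (Fin n → Bool) → ℝ) (i : Fin n) : ℝ :=
  (∑ x : Fin n → Bool,
      (|u x - u (Function.update x i true)| +
        |u x - u (Function.update x i false)|) / 2) / 2 ^ n

/-!
Write `u = (f_δ)_π` and `T_ρ` for the noise operator. Smoothing every coordinate and then fixing
those in `π` is the same as first averaging `f` over noisy copies of the fixed values, which gives
a function `h` with `|h| ≤ 1`, and then applying `T_{1-δ}` to the free coordinates; hence
`û(S) = (1-δ)^|S| ĥ(S)`. The influence `Inf_i(u)` is the `L¹` norm of the coordinate Laplacian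
`L_i u = ∑_{S ∋ i} û(S) χ_S`, so it is at most its `L²` norm, and Parseval gives
`∑_i Inf_i(u)² ≤ ∑_S |S| (1-δ)^(2|S|) ĥ(S)² ≤ max_k k (1-δ)^(2k) ≤ 1/(2eδ)`.
Hence at most `1/(2eδτ²) ≤ 1/(eδ(τ-2δd)²)` coordinates have influence at least `τ`.
-/

open Finset

lemma card_filter_mul_sq_le_sum_sq {ι : Type*} [Fintype ι] {τ : ℝ} (hτ : 0 ≤ τ) (a : ι → ℝ) :
    (#{i | τ ≤ a i} : ℝ) * τ ^ 2 ≤ ∑ i, a i ^ 2 :=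
  calc (#{i | τ ≤ a i} : ℝ) * τ ^ 2 = ∑ i ∈ {i | τ ≤ a i}, τ ^ 2 := by
        rw [sum_const, nsmul_eq_mul]
    _ ≤ ∑ i ∈ {i | τ ≤ a i}, a i ^ 2 :=
        sum_le_sum fun i hi => pow_le_pow_left₀ hτ (mem_filter.mp hi).2 2
    _ ≤ ∑ i, a i ^ 2 :=
        sum_le_sum_of_subset_of_nonneg (filter_subset _ _) fun _ _ _ => sq_nonneg _

namespace BooleanCube

variable {n : ℕ}

lemma abs_bval (b : Bool) : |bval b| = 1 := by
  cases b <;> simp [bval]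

lemma bval_mul_bval (a b : Bool) : bval a * bval b = if a = b then 1 else -1 := by
  cases a <;> cases b <;> simp [bval]

lemma sum_prod_bool (g : Fin n → Bool → ℝ) :
    ∑ x : Fin n → Bool, ∏ i, g i (x i) = ∏ i, (g i true + g i false) := by
  rw [← Fintype.prod_sum]
  simp

noncomputable def walsh (S : Finset (Fin n)) (x : Fin n → Bool) : ℝ := ∏ i ∈ S, bval (x i)

noncomputable def walshCoeff (u : (Fin n → Bool) → ℝ) (S : Finset (Fin n)) : ℝ :=
  (∑ x, u x * walsh S x) / 2 ^ n

noncomputable def walshFactor (S : Finset (Fin n)) (i : Fin n) (c : Bool) : ℝ :=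
  if i ∈ S then bval c else 1

lemma walsh_eq_prod_univ (S : Finset (Fin n)) (x : Fin n → Bool) :
    walsh S x = ∏ i, walshFactor S i (x i) := by
  simp only [walsh, walshFactor, prod_ite_mem, univ_inter]

lemma walsh_mul_walsh (S T : Finset (Fin n)) (x : Fin n → Bool) :
    walsh S x * walsh T x = walsh (symmDiff S T) x := by
  simp only [walsh_eq_prod_univ, ← prod_mul_distrib]
  refine prod_congr rfl fun i _ => ?_
  by_cases hS : i ∈ S <;> by_cases hT : i ∈ T <;>
    simp [walshFactor, hS, hT, mem_symmDiff, bval_mul_bval]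

lemma sum_walsh (S : Finset (Fin n)) :
    ∑ x, walsh S x = if S = ∅ then (2 : ℝ) ^ n else 0 := by
  simp only [walsh_eq_prod_univ]
  rw [sum_prod_bool (walshFactor S)]
  split_ifs with hS
  · simp [walshFactor, hS, one_add_one_eq_two]
  · obtain ⟨i, hi⟩ := nonempty_iff_ne_empty.mpr hS
    exact prod_eq_zero (mem_univ i) (by simp [walshFactor, hi, bval])

lemma sum_walsh_mul_walsh (S T : Finset (Fin n)) :
    ∑ x, walsh S x * walsh T x = if S = T then (2 : ℝ) ^ n else 0 := by
  simp only [walsh_mul_walsh, sum_walsh]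
  congr 1
  exact propext symmDiff_eq_bot

lemma sum_walsh_mul_walsh_apply (y x : Fin n → Bool) :
    ∑ S, walsh S y * walsh S x = if y = x then (2 : ℝ) ^ n else 0 := by
  simp only [walsh, ← prod_mul_distrib]
  rw [← powerset_univ, ← prod_one_add]
  split_ifs with hyx
  · subst hyx
    simp [bval_mul_bval, one_add_one_eq_two]
  · obtain ⟨i, hi⟩ := Function.ne_iff.mp hyx
    exact prod_eq_zero (mem_univ i) (by simp [bval_mul_bval, hi])

lemma sum_walshCoeff_mul_walsh (u : (Fin n → Bool) → ℝ) (x : Fin n → Bool) :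
    ∑ S, walshCoeff u S * walsh S x = u x := by
  simp only [walshCoeff, div_mul_eq_mul_div, ← sum_div, sum_mul, mul_assoc]
  rw [sum_comm]
  simp only [← mul_sum, sum_walsh_mul_walsh_apply, mul_ite, mul_zero, sum_ite_eq', mem_univ,
    if_true]
  field_simp

lemma sum_sq_sum_mul_walsh (a : Finset (Fin n) → ℝ) :
    ∑ x, (∑ S, a S * walsh S x) ^ 2 = 2 ^ n * ∑ S, a S ^ 2 := by
  have hexpand : ∀ x, (∑ S, a S * walsh S x) ^ 2
      = ∑ S, ∑ T, a S * a T * (walsh S x * walsh T x) := fun x => by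
    rw [sq, sum_mul_sum]
    exact sum_congr rfl fun S _ => sum_congr rfl fun T _ => by ring
  simp only [hexpand]
  rw [sum_comm]
  simp only [mul_sum]
  refine sum_congr rfl fun S _ => ?_
  rw [sum_comm]
  simp only [← mul_sum, sum_walsh_mul_walsh, mul_ite, mul_zero, sum_ite_eq, mem_univ, if_true]
  ring

lemma sum_sq_walshCoeff_le_one (u : (Fin n → Bool) → ℝ) (hu : ∀ x, |u x| ≤ 1) :
    ∑ S, walshCoeff u S ^ 2 ≤ 1 := by
  have hparseval := sum_sq_sum_mul_walsh (walshCoeff u)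
  simp only [sum_walshCoeff_mul_walsh] at hparseval
  have hsq : ∑ x, u x ^ 2 ≤ ∑ _x : Fin n → Bool, (1 : ℝ) :=
    sum_le_sum fun x _ => by nlinarith [abs_le.mp (hu x)]
  simp only [sum_const, card_univ, Fintype.card_fun, Fintype.card_bool, Fintype.card_fin,
    nsmul_eq_mul, mul_one, Nat.cast_pow, Nat.cast_ofNat] at hsq
  nlinarith [pow_pos (two_pos : (0 : ℝ) < 2) n]

lemma walsh_update_not (S : Finset (Fin n)) (x : Fin n → Bool) (i : Fin n) :
    walsh S (Function.update x i (!x i)) = if i ∈ S then -walsh S x else walsh S x := by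
  simp only [walsh_eq_prod_univ]
  split_ifs with hi
  · rw [← mul_prod_erase univ _ (mem_univ i), ← mul_prod_erase univ _ (mem_univ i),
      Function.update_self, ← neg_mul]
    congr 1
    · cases x i <;> simp [walshFactor, hi, bval]
    · exact prod_congr rfl fun j hj => by rw [Function.update_of_ne (ne_of_mem_erase hj)]
  · refine prod_congr rfl fun j _ => ?_
    by_cases hj : j = i
    · subst hj; simp [walshFactor, hi]
    · rw [Function.update_of_ne hj]

noncomputable def coordLaplacian (u : (Fin n → Bool) → ℝ) (i : Fin n) (x : Fin n → Bool) : ℝ :=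
  (u x - u (Function.update x i (!x i))) / 2

lemma coordLaplacian_eq_sum (u : (Fin n → Bool) → ℝ) (i : Fin n) (x : Fin n → Bool) :
    coordLaplacian u i x = ∑ S, (if i ∈ S then walshCoeff u S else 0) * walsh S x := by
  rw [coordLaplacian, ← sum_walshCoeff_mul_walsh u x,
    ← sum_walshCoeff_mul_walsh u (Function.update x i (!x i)), ← sum_sub_distrib, sum_div]
  refine sum_congr rfl fun S _ => ?_
  rw [walsh_update_not]
  split_ifs <;> ring

lemma inflR_eq_sum_abs_coordLaplacian (u : (Fin n → Bool) → ℝ) (i : Fin n) :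
    inflR u i = (∑ x, |coordLaplacian u i x|) / 2 ^ n := by
  rw [inflR]
  congr 1
  refine sum_congr rfl fun x _ => ?_
  rw [coordLaplacian, abs_div, abs_two]
  cases hxi : x i
  · rw [← hxi, Function.update_eq_self, sub_self, abs_zero, add_zero, hxi]
    rfl
  · rw [← hxi, Function.update_eq_self, sub_self, abs_zero, zero_add, hxi]
    rfl

lemma inflR_sq_le (u : (Fin n → Bool) → ℝ) (i : Fin n) :
    inflR u i ^ 2 ≤ ∑ S, if i ∈ S then walshCoeff u S ^ 2 else 0 := by
  have hparseval : ∑ x, coordLaplacian u i x ^ 2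
      = 2 ^ n * ∑ S, if i ∈ S then walshCoeff u S ^ 2 else 0 := by
    simp only [coordLaplacian_eq_sum, sum_sq_sum_mul_walsh, ite_pow, zero_pow two_ne_zero]
  have hcs := sq_sum_le_card_mul_sum_sq (s := univ) (f := fun x => |coordLaplacian u i x|)
  simp only [sq_abs, hparseval, card_univ, Fintype.card_fun, Fintype.card_bool,
    Fintype.card_fin, Nat.cast_pow, Nat.cast_ofNat] at hcs
  rw [inflR_eq_sum_abs_coordLaplacian, div_pow, div_le_iff₀ (by positivity)]
  linarith

lemma sum_sq_inflR_le (u : (Fin n → Bool) → ℝ) :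
    ∑ i, inflR u i ^ 2 ≤ ∑ S, (#S : ℝ) * walshCoeff u S ^ 2 := by
  calc ∑ i, inflR u i ^ 2 ≤ ∑ i, ∑ S, if i ∈ S then walshCoeff u S ^ 2 else 0 :=
        sum_le_sum fun i _ => inflR_sq_le u i
    _ = ∑ S, (#S : ℝ) * walshCoeff u S ^ 2 := by
        rw [sum_comm]
        simp only [sum_ite_mem, univ_inter, sum_const, nsmul_eq_mul]

noncomputable def kernelOp (K : Fin n → Bool → Bool → ℝ) (F : (Fin n → Bool) → ℝ)
    (x : Fin n → Bool) : ℝ :=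
  ∑ y, (∏ i, K i (y i) (x i)) * F y

lemma sum_kernelOp_mul_walsh (K : Fin n → Bool → Bool → ℝ) (F : (Fin n → Bool) → ℝ)
    (S : Finset (Fin n)) :
    ∑ x, kernelOp K F x * walsh S x
      = ∑ y, F y * ∏ i, ∑ c, K i (y i) c * walshFactor S i c := by
  simp only [kernelOp, sum_mul]
  rw [sum_comm]
  refine sum_congr rfl fun y _ => ?_
  rw [Fintype.prod_sum, mul_sum]
  refine sum_congr rfl fun x _ => ?_
  rw [walsh_eq_prod_univ, prod_mul_distrib]
  ring

lemma walshCoeff_kernelOp_eq_mul {K L : Fin n → Bool → Bool → ℝ} {S : Finset (Fin n)}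
    (r : Fin n → ℝ)
    (hKL : ∀ i a, ∑ c, K i a c * walshFactor S i c = r i * ∑ c, L i a c * walshFactor S i c)
    (F : (Fin n → Bool) → ℝ) :
    walshCoeff (kernelOp K F) S = (∏ i, r i) * walshCoeff (kernelOp L F) S := by
  simp only [walshCoeff, sum_kernelOp_mul_walsh, hKL, prod_mul_distrib]
  rw [mul_div_assoc', mul_sum]
  simp only [mul_left_comm]

lemma abs_kernelOp_le_one {K : Fin n → Bool → Bool → ℝ} (hK : ∀ i a c, 0 ≤ K i a c)
    (hK1 : ∀ i c, K i true c + K i false c = 1) {F : (Fin n → Bool) → ℝ}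
    (hF : ∀ y, |F y| ≤ 1) (x : Fin n → Bool) :
    |kernelOp K F x| ≤ 1 := by
  have hweight : ∀ y : Fin n → Bool, 0 ≤ ∏ i, K i (y i) (x i) :=
    fun y => prod_nonneg fun i _ => hK i (y i) (x i)
  calc |kernelOp K F x| ≤ ∑ y, |(∏ i, K i (y i) (x i)) * F y| := abs_sum_le_sum_abs _ _
    _ ≤ ∑ y, ∏ i, K i (y i) (x i) := sum_le_sum fun y _ => by
        rw [abs_mul, abs_of_nonneg (hweight y)]
        exact mul_le_of_le_one_right (hweight y) (hF y)
    _ = 1 := by simp [sum_prod_bool (fun i b => K i b (x i)), hK1]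

noncomputable def fixedNoiseKernel (δ : ℝ) (π : Fin n → Option Bool) (i : Fin n) (a c : Bool) :
    ℝ :=
  (π i).elim (if a = c then 1 else 0) fun b => if a = b then 1 - δ / 2 else δ / 2

lemma smooth_applyR_eq_kernelOp (δ : ℝ) (π : Fin n → Option Bool) (F : (Fin n → Bool) → ℝ)
    (x : Fin n → Bool) :
    smooth δ F (applyR π x)
      = kernelOp (fun i a c => if a = (π i).getD c then 1 - δ / 2 else δ / 2) F x :=
  rfl

lemma walshCoeff_smooth_applyR (δ : ℝ) (π : Fin n → Option Bool) (F : (Fin n → Bool) → ℝ)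
    (S : Finset (Fin n)) :
    walshCoeff (fun x => smooth δ F (applyR π x)) S
      = (1 - δ) ^ #S * walshCoeff (kernelOp (fixedNoiseKernel δ π) F) S := by
  simp only [smooth_applyR_eq_kernelOp]
  rw [walshCoeff_kernelOp_eq_mul (L := fixedNoiseKernel δ π) (fun i => if i ∈ S then 1 - δ else 1),
    prod_ite_mem, univ_inter, prod_const]
  intro i a
  rcases hπi : π i with _ | b
  · by_cases hiS : i ∈ S <;> cases a <;>
      simp [fixedNoiseKernel, walshFactor, hπi, hiS, bval] <;> ring
  · by_cases hiS : i ∈ S <;> cases a <;> cases b <;>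
      simp [fixedNoiseKernel, walshFactor, hπi, hiS, bval]

lemma abs_kernelOp_fixedNoiseKernel_le_one {δ : ℝ} (hδ0 : 0 ≤ δ) (hδ1 : δ ≤ 1)
    (π : Fin n → Option Bool) {F : (Fin n → Bool) → ℝ} (hF : ∀ y, |F y| ≤ 1)
    (x : Fin n → Bool) :
    |kernelOp (fixedNoiseKernel δ π) F x| ≤ 1 := by
  refine abs_kernelOp_le_one (fun i a c => ?_) (fun i c => ?_) hF x
  · rcases hπi : π i with _ | b <;> simp only [fixedNoiseKernel, hπi, Option.elim] <;>
      split_ifs <;> linarith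
  · rcases hπi : π i with _ | b <;> [cases c; cases b] <;> simp [fixedNoiseKernel, hπi]

lemma mul_exp_neg_le_exp_neg_one (t : ℝ) : t * Real.exp (-t) ≤ Real.exp (-1) := by
  calc t * Real.exp (-t) ≤ Real.exp (t - 1) * Real.exp (-t) :=
        mul_le_mul_of_nonneg_right (by linarith [Real.add_one_le_exp (t - 1)]) (Real.exp_pos _).le
    _ = Real.exp (-1) := by rw [← Real.exp_add]; ring_nf

lemma natCast_mul_one_sub_pow_le {δ : ℝ} (hδ0 : 0 < δ) (hδ1 : δ ≤ 1) (k : ℕ) :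
    (k : ℝ) * (1 - δ) ^ (2 * k) ≤ (2 * Real.exp 1 * δ)⁻¹ := by
  have hpow : (1 - δ) ^ (2 * k) ≤ Real.exp (-(2 * δ * k)) :=
    calc (1 - δ) ^ (2 * k) ≤ Real.exp (-δ) ^ (2 * k) :=
          pow_le_pow_left₀ (by linarith) (by linarith [Real.add_one_le_exp (-δ)]) _
      _ = Real.exp (-(2 * δ * k)) := by rw [← Real.exp_nat_mul]; push_cast; ring_nf
  calc (k : ℝ) * (1 - δ) ^ (2 * k) ≤ k * Real.exp (-(2 * δ * k)) := by gcongr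
    _ = 2 * δ * k * Real.exp (-(2 * δ * k)) / (2 * δ) := by field_simp
    _ ≤ Real.exp (-1) / (2 * δ) := by gcongr; exact mul_exp_neg_le_exp_neg_one _
    _ = (2 * Real.exp 1 * δ)⁻¹ := by rw [Real.exp_neg]; field_simp

lemma sum_sq_inflR_smooth_applyR_le {δ : ℝ} (hδ0 : 0 < δ) (hδ1 : δ ≤ 1)
    (π : Fin n → Option Bool) {F : (Fin n → Bool) → ℝ} (hF : ∀ y, |F y| ≤ 1) :
    ∑ i, inflR (fun x => smooth δ F (applyR π x)) i ^ 2 ≤ (2 * Real.exp 1 * δ)⁻¹ := by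
  set h := kernelOp (fixedNoiseKernel δ π) F
  calc ∑ i, inflR (fun x => smooth δ F (applyR π x)) i ^ 2
      ≤ ∑ S, (#S : ℝ) * walshCoeff (fun x => smooth δ F (applyR π x)) S ^ 2 :=
        sum_sq_inflR_le _
    _ = ∑ S, ((#S : ℝ) * (1 - δ) ^ (2 * #S)) * walshCoeff h S ^ 2 := by
        refine sum_congr rfl fun S _ => ?_
        rw [walshCoeff_smooth_applyR]
        ring
    _ ≤ ∑ S, (2 * Real.exp 1 * δ)⁻¹ * walshCoeff h S ^ 2 :=
        sum_le_sum fun S _ => by gcongr; exact natCast_mul_one_sub_pow_le hδ0 hδ1 _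
    _ ≤ (2 * Real.exp 1 * δ)⁻¹ := by
        rw [← mul_sum]
        exact mul_le_of_le_one_right (by positivity) (sum_sq_walshCoeff_le_one h
          (abs_kernelOp_fixedNoiseKernel_le_one hδ0.le hδ1 π hF))

end BooleanCube

open BooleanCube in
theorem stmt18_general {n : ℕ} (f : (Fin n → Bool) → Bool) (δ : ℝ) (hδ0 : 0 < δ) (hδ1 : δ ≤ 1)
    (π : Fin n → Option Bool) (d : ℕ)
    (τ : ℝ) (hτ : 2 * δ * d < τ) :
    (Nat.card {i : Fin n //
        π i = none ∧ τ ≤ inflR (fun x => smooth δ (fun z => bval (f z)) (applyR π x)) i} : ℝ)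
      ≤ 1 / (Real.exp 1 * δ * (τ - 2 * δ * d) ^ 2) := by
  set u := fun x => smooth δ (fun z => bval (f z)) (applyR π x)
  have hgap : 0 < τ - 2 * δ * d := sub_pos.mpr hτ
  have hτ0 : τ - 2 * δ * d ≤ τ := by linarith [show 0 ≤ 2 * δ * d by positivity]
  have hτpos : 0 < τ := hgap.trans_le hτ0
  have hcard : (Nat.card {i // π i = none ∧ τ ≤ inflR u i} : ℝ) ≤ #{i | τ ≤ inflR u i} := by
    rw [Nat.card_eq_fintype_card, Fintype.card_subtype]
    exact_mod_cast card_le_card fun i => by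
      simpa only [mem_filter, mem_univ, true_and] using And.right
  have hmass : (#{i | τ ≤ inflR u i} : ℝ) * τ ^ 2 ≤ (2 * Real.exp 1 * δ)⁻¹ :=
    (card_filter_mul_sq_le_sum_sq hτpos.le _).trans
      (sum_sq_inflR_smooth_applyR_le hδ0 hδ1 π fun z => (abs_bval (f z)).le)
  calc (Nat.card {i // π i = none ∧ τ ≤ inflR u i} : ℝ)
      ≤ (2 * Real.exp 1 * δ)⁻¹ / τ ^ 2 := by
        rw [le_div_iff₀ (by positivity)]
        exact (mul_le_mul_of_nonneg_right hcard (sq_nonneg τ)).trans hmass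
    _ ≤ 1 / (Real.exp 1 * δ * (τ - 2 * δ * d) ^ 2) := by
        rw [div_eq_mul_inv, ← mul_inv, one_div]
        gcongr
        nlinarith [Real.exp_pos 1, pow_le_pow_left₀ hgap.le hτ0 2]

/-- **Few influential variables of a restricted smoothed function.** For
`f : {-1,1}^n → {-1,1}`, `δ ∈ (0,1]`, a restriction `π` with `|π| ≤ d`, and `τ > 2δd`,
the number of coordinates `i` not fixed by `π` with `Inf_i((f_δ)_π) ≥ τ` is at most
`1/(e·δ·(τ − 2δd)²)`. -/
theorem stmt18 {n : ℕ} (f : (Fin n → Bool) → Bool) (δ : ℝ) (hδ0 : 0 < δ) (hδ1 : δ ≤ 1)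
    (π : Fin n → Option Bool) (d : ℕ) (hπ : rsize π ≤ d)
    (τ : ℝ) (hτ : 2 * δ * d < τ) :
    (Nat.card {i : Fin n //
        π i = none ∧ τ ≤ inflR (fun x => smooth δ (fun z => bval (f z)) (applyR π x)) i} : ℝ)
      ≤ 1 / (Real.exp 1 * δ * (τ - 2 * δ * d) ^ 2) :=
  stmt18_general f δ hδ0 hδ1 π d τ hτ
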